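/- Let 𝐏 ⊂ ℤ^n be a finite set with P = Conv(𝐏), and let D_1, …, D_n be daughter polytopes of 𝐏 that are semi-interlaced in 𝐏. Then for every suture S ∈ Θ(P), the polytopes {D_i ∩ S : D_i ∩ S ≠ ∅} (there are exactly dim(S) of them) are semi-interlaced daughter polytopes of the finite set 𝐏 ∩ S, regarded inside aff(S). -/

import Mathlib

open Pointwise Filter
open scoped Classical

noncomputable section

def intLattice (n : ℕ) : AddSubgroup (Fin n → ℝ) where
  carrier := {x | ∀ i, ∃ m : ℤ, x i = (m : ℝ)}
  zero_mem' := fun i => ⟨0, by simp⟩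
  add_mem' := by
    intro a b ha hb i
    obtain ⟨p, hp⟩ := ha i
    obtain ⟨q, hq⟩ := hb i
    exact ⟨p + q, by simp [hp, hq]⟩
  neg_mem' := by
    intro a ha i
    obtain ⟨p, hp⟩ := ha i
    exact ⟨-p, by simp [hp]⟩

/-- Lattice volume (normalized so that a unit simplex of the lattice `L` has
volume `1`) of a `k`-dimensional set `Q`, defined via asymptotic counting of
lattice points in dilations of `Q`. -/
def latVol {E : Type*} [AddCommGroup E] [Module ℝ E] (L : AddSubgroup E)
    (k : ℕ) (Q : Set E) : ℝ :=
  Filter.limsup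
    (fun t : ℕ => (Nat.factorial k : ℝ) *
      (Nat.card ↥(((t : ℝ) • Q) ∩ (L : Set E))) / (t : ℝ) ^ k) Filter.atTop

/-- Mixed volume of the polytopes `Q i`, `i ∈ T`, via inclusion-exclusion of
lattice volumes of Minkowski sums. -/
def mixedVol {E : Type*} [AddCommGroup E] [Module ℝ E] {ι : Type*}
    (L : AddSubgroup E) (T : Finset ι) (Q : ι → Set E) : ℝ :=
  ∑ I ∈ T.powerset,
    if I.Nonempty then
      (-1 : ℝ) ^ (T.card - I.card) * latVol L T.card (∑ i ∈ I, Q i)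
    else 0

/-- `F` is a face of `P`: the set of maximizers over `P` of some linear functional. -/
def IsFaceOf {E : Type*} [AddCommGroup E] [Module ℝ E] (P F : Set E) : Prop :=
  ∃ ξ : E →ₗ[ℝ] ℝ, F = {x ∈ P | ∀ y ∈ P, ξ y ≤ ξ x}

/-- Dimension of (the affine span of) a set. -/
def sdim {E : Type*} [AddCommGroup E] [Module ℝ E] (Q : Set E) : ℕ :=
  Module.finrank ℝ (vectorSpan ℝ Q)

/-- The family D-family: faces of `P` maximal among the faces disjoint from `D`. -/
def DFam {E : Type*} [AddCommGroup E] [Module ℝ E] (P D : Set E) : Set (Set E) :=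
  {F | Maximal (fun G => IsFaceOf P G ∧ G ∩ D = ∅) F}

/-- `D` is a daughter polytope of the finite set `A`. -/
def IsDaughter {E : Type*} [AddCommGroup E] [Module ℝ E] (A : Finset E) (D : Set E) : Prop :=
  D.Nonempty ∧
  (∀ F ∈ DFam (convexHull ℝ (A : Set E)) D, ∀ F' ∈ DFam (convexHull ℝ (A : Set E)) D,
    F ≠ F' → F ∩ F' = ∅) ∧
  D = convexHull ℝ ((A : Set E) \ ⋃ F ∈ DFam (convexHull ℝ (A : Set E)) D, F)

/-- The daughter polytopes `D i`, `i ∈ T`, are semi-interlaced in `A`. -/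
def SemiInterlaced {E : Type*} [AddCommGroup E] [Module ℝ E] {ι : Type*}
    (A : Finset E) (T : Finset ι) (D : ι → Set E) : Prop :=
  (∀ i ∈ T, IsDaughter A (D i)) ∧
  ∀ F, IsFaceOf (convexHull ℝ (A : Set E)) F →
    sdim F ≤ (T.filter fun i => (D i ∩ F).Nonempty).card

/-- A face `F` of `Conv A` is a suture if exactly `dim F` of the `D i` meet it. -/
def IsSuture {E : Type*} [AddCommGroup E] [Module ℝ E] {ι : Type*}
    (A : Finset E) (T : Finset ι) (D : ι → Set E) (F : Set E) : Prop :=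
  IsFaceOf (convexHull ℝ (A : Set E)) F ∧
  (T.filter fun i => (D i ∩ F).Nonempty).card = sdim F

/-!
Two facts about the faces of `Conv A`, `A` finite, carry the argument. First, if `S` is a face
and `C ⊆ Conv A`, then `Conv C ∩ S = Conv (C ∩ S)`: a convex combination of points of `C`
attaining the maximum of a functional puts weight only on maximizers. Second, a face of a face
is a face: if `S` maximizes `ξ` and `F ⊆ S` maximizes `η` on `S`, then `F` maximizes `ξ + ε η`
for `ε > 0` so small that it still ranks the finitely many points of `A` first by `ξ`.
Hence every face of `S` maximal among those missing `D ∩ S` has the form `F ∩ S` with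
`F ∈ 𝒟(D)`, and these sets cover the same points of `S` as the members of `𝒟(D)`; this makes
`D ∩ S` a daughter polytope of `A ∩ S`. Semi-interlacing passes to `S` because faces of `S`
are faces of `Conv A`.
-/

section

variable {E : Type*} [AddCommGroup E] [Module ℝ E]

def maximizers (P : Set E) (ξ : E →ₗ[ℝ] ℝ) : Set E :=
  {x ∈ P | ∀ y ∈ P, ξ y ≤ ξ x}

theorem isFaceOf_iff {P F : Set E} : IsFaceOf P F ↔ ∃ ξ, F = maximizers P ξ := Iff.rfl

theorem maximizers_subset (P : Set E) (ξ : E →ₗ[ℝ] ℝ) : maximizers P ξ ⊆ P :=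
  fun _ hx => hx.1

theorem IsFaceOf.subset {P F : Set E} (hF : IsFaceOf P F) : F ⊆ P := by
  obtain ⟨ξ, rfl⟩ := hF
  exact maximizers_subset P ξ

theorem Convex.maximizers {P : Set E} (hP : Convex ℝ P) (ξ : E →ₗ[ℝ] ℝ) :
    Convex ℝ (_root_.maximizers P ξ) := by
  have : _root_.maximizers P ξ = P ∩ ⋂ y ∈ P, {x | ξ y ≤ ξ x} := by
    ext x; simp [_root_.maximizers]
  rw [this]
  exact hP.inter (convex_iInter₂ fun y _ => convex_halfSpace_ge ξ.isLinear _)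

theorem forall_convexHull_le_iff {s : Set E} (ξ : E →ₗ[ℝ] ℝ) (r : ℝ) :
    (∀ y ∈ convexHull ℝ s, ξ y ≤ r) ↔ ∀ y ∈ s, ξ y ≤ r :=
  ⟨fun h y hy => h y (subset_convexHull ℝ s hy),
    fun h _ hy => convexHull_min h (convex_halfSpace_le ξ.isLinear r) hy⟩

theorem mem_convexHull_setOf_eq_of_forall_le {C : Set E} {ξ : E →ₗ[ℝ] ℝ} {x : E}
    (hx : x ∈ convexHull ℝ C) (hmax : ∀ c ∈ C, ξ c ≤ ξ x) :
    x ∈ convexHull ℝ {c ∈ C | ξ c = ξ x} := by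
  rw [convexHull_eq] at hx
  obtain ⟨ι, t, w, z, hw0, hw1, hzC, rfl⟩ := hx
  have hslack : ∑ i ∈ t, w i * (ξ (t.centerMass w z) - ξ (z i)) = 0 := by
    have hξx : ξ (t.centerMass w z) = ∑ i ∈ t, w i * ξ (z i) := by
      simp [Finset.centerMass_eq_of_sum_1 _ _ hw1, map_sum]
    simp only [mul_sub, Finset.sum_sub_distrib, ← Finset.sum_mul, hw1, one_mul, ← hξx, sub_self]
  have htight : ∀ i ∈ t, w i ≠ 0 → ξ (z i) = ξ (t.centerMass w z) := fun i hi hwi => by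
    have := (Finset.sum_eq_zero_iff_of_nonneg fun j hj =>
      mul_nonneg (hw0 j hj) (sub_nonneg.2 (hmax _ (hzC j hj)))).1 hslack i hi
    linarith [(mul_eq_zero.1 this).resolve_left hwi]
  rw [← Finset.centerMass_filter_ne_zero] at htight ⊢
  refine Finset.centerMass_mem_convexHull _ (fun i hi => hw0 i (Finset.mem_filter.1 hi).1)
    (by rw [Finset.sum_filter_ne_zero, hw1]; exact one_pos) fun i hi => ?_
  obtain ⟨hit, hwi⟩ := Finset.mem_filter.1 hi
  exact ⟨hzC i hit, htight i hit hwi⟩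

theorem IsFaceOf.convexHull_inter {P S C : Set E} (hP : Convex ℝ P) (hS : IsFaceOf P S)
    (hC : C ⊆ P) : convexHull ℝ C ∩ S = convexHull ℝ (C ∩ S) := by
  obtain ⟨ξ, rfl⟩ := hS
  refine subset_antisymm ?_ fun x hx =>
    ⟨convexHull_mono Set.inter_subset_left hx,
      convexHull_min Set.inter_subset_right (hP.maximizers ξ) hx⟩
  rintro x ⟨hxC, hxP, hxmax⟩
  refine convexHull_mono ?_ (mem_convexHull_setOf_eq_of_forall_le hxC fun c hc => hxmax c (hC hc))
  exact fun c hc => ⟨hc.1, hC hc.1, fun y hy => hc.2 ▸ hxmax y hy⟩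

theorem IsFaceOf.eq_convexHull_inter {s S : Set E} (hS : IsFaceOf (convexHull ℝ s) S) :
    S = convexHull ℝ (s ∩ S) := by
  rw [← hS.convexHull_inter (convex_convexHull ℝ s) (subset_convexHull ℝ s),
    Set.inter_eq_right.2 hS.subset]

theorem maximizers_convexHull (s : Set E) (ξ : E →ₗ[ℝ] ℝ) :
    maximizers (convexHull ℝ s) ξ = convexHull ℝ (maximizers s ξ) := by
  have hface : IsFaceOf (convexHull ℝ s) (maximizers (convexHull ℝ s) ξ) := ⟨ξ, rfl⟩
  refine hface.eq_convexHull_inter.trans (congrArg _ ?_)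
  ext x
  simp only [maximizers, Set.mem_inter_iff, Set.mem_ofPred_eq, forall_convexHull_le_iff]
  exact ⟨fun ⟨hx, _, h⟩ => ⟨hx, h⟩, fun ⟨hx, h⟩ => ⟨hx, subset_convexHull ℝ s hx, h⟩⟩

theorem exists_pos_add_smul_lt_of_lt (s : Finset E) (ξ η : E →ₗ[ℝ] ℝ) :
    ∃ ε > (0 : ℝ), ∀ a ∈ s, ∀ b ∈ s, ξ a < ξ b → (ξ + ε • η) a < (ξ + ε • η) b := by
  have hev : ∀ a ∈ s, ∀ b ∈ s, ∀ᶠ ε in nhdsWithin (0 : ℝ) (Set.Ioi 0),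
      ξ a < ξ b → (ξ + ε • η) a < (ξ + ε • η) b := fun a _ b _ => by
    by_cases hab : ξ a < ξ b
    · have hcont : Continuous fun ε : ℝ => (ξ + ε • η) b - (ξ + ε • η) a := by
        simp only [LinearMap.add_apply, LinearMap.smul_apply, smul_eq_mul]; fun_prop
      have := (hcont.tendsto 0).eventually (lt_mem_nhds (a := 0) (by simpa using hab))
      exact (eventually_nhdsWithin_of_eventually_nhds this).mono fun ε h _ => by linarith
    · exact Filter.Eventually.of_forall fun _ h => absurd h hab
  simp only [← Filter.eventually_all_finset] at hev
  obtain ⟨ε, hlex, hε⟩ := (hev.and self_mem_nhdsWithin).exists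
  exact ⟨ε, hε, hlex⟩

theorem maximizers_add_smul {s : Set E} {ξ η : E →ₗ[ℝ] ℝ} {ε : ℝ} (hε : 0 < ε)
    (hlex : ∀ a ∈ s, ∀ b ∈ s, ξ a < ξ b → (ξ + ε • η) a < (ξ + ε • η) b) :
    maximizers s (ξ + ε • η) = maximizers (maximizers s ξ) η := by
  ext a
  simp only [maximizers, Set.mem_ofPred_eq, LinearMap.add_apply, LinearMap.smul_apply,
    smul_eq_mul] at hlex ⊢
  constructor
  · rintro ⟨ha, h⟩
    have hξ : ∀ b ∈ s, ξ b ≤ ξ a := fun b hb =>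
      not_lt.1 fun hab => (h b hb).not_gt (hlex a ha b hb hab)
    refine ⟨⟨ha, hξ⟩, fun b ⟨hb, hbmax⟩ => le_of_mul_le_mul_left ?_ hε⟩
    linarith [h b hb, hbmax a ha, hξ b hb]
  · rintro ⟨⟨ha, hξ⟩, hη⟩
    refine ⟨ha, fun b hb => ?_⟩
    rcases (hξ b hb).lt_or_eq with hlt | heq
    · exact (hlex b hb a ha hlt).le
    · have := mul_le_mul_of_nonneg_left (hη b ⟨hb, fun c hc => heq ▸ hξ c hc⟩) hε.le
      linarith

theorem IsFaceOf.trans {A : Finset E} {S F : Set E} (hS : IsFaceOf (convexHull ℝ (A : Set E)) S)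
    (hF : IsFaceOf S F) : IsFaceOf (convexHull ℝ (A : Set E)) F := by
  obtain ⟨ξ, rfl⟩ := isFaceOf_iff.1 hS
  obtain ⟨η, rfl⟩ := isFaceOf_iff.1 hF
  obtain ⟨ε, hε, hlex⟩ := exists_pos_add_smul_lt_of_lt A ξ η
  refine isFaceOf_iff.2 ⟨ξ + ε • η, ?_⟩
  rw [maximizers_convexHull, maximizers_convexHull, maximizers_convexHull,
    maximizers_add_smul hε fun a ha b hb => hlex a ha b hb]

theorem IsFaceOf.inter_of_subset {P F S : Set E} (hF : IsFaceOf P F) (hSP : S ⊆ P)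
    (hne : (F ∩ S).Nonempty) : IsFaceOf S (F ∩ S) := by
  obtain ⟨ξ, rfl⟩ := isFaceOf_iff.1 hF
  obtain ⟨z, ⟨-, hzmax⟩, hzS⟩ := hne
  refine ⟨ξ, subset_antisymm (fun x hx => ⟨hx.2, fun y hy => hx.1.2 y (hSP hy)⟩) ?_⟩
  rintro x ⟨hxS, hxmax⟩
  exact ⟨⟨hSP hxS, fun y hy => (hzmax y hy).trans (hxmax z hzS)⟩, hxS⟩

theorem Finset.coe_filter_mem {α : Type*} (A : Finset α) (S : Set α) :
    ((A.filter (· ∈ S) : Finset α) : Set α) = (A : Set α) ∩ S :=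
  Set.ext fun _ => Finset.mem_filter

theorem IsFaceOf.convexHull_filter {A : Finset E} {S : Set E}
    (hS : IsFaceOf (convexHull ℝ (A : Set E)) S) :
    convexHull ℝ ((A.filter (· ∈ S) : Finset E) : Set E) = S := by
  rw [Finset.coe_filter_mem]
  exact hS.eq_convexHull_inter.symm

theorem finite_setOf_isFaceOf_convexHull (A : Finset E) :
    {F | IsFaceOf (convexHull ℝ (A : Set E)) F}.Finite :=
  (A.powerset.finite_toSet.image fun B : Finset E => convexHull ℝ (B : Set E)).subset fun F hF =>
    ⟨A.filter (· ∈ F), Finset.mem_powerset.2 (Finset.filter_subset _ A), hF.convexHull_filter⟩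

theorem exists_mem_dFam_superset {A : Finset E} {D G : Set E}
    (hG : IsFaceOf (convexHull ℝ (A : Set E)) G) (hGD : G ∩ D = ∅) :
    ∃ F ∈ DFam (convexHull ℝ (A : Set E)) D, G ⊆ F := by
  have hfin : {F | IsFaceOf (convexHull ℝ (A : Set E)) F ∧ F ∩ D = ∅}.Finite :=
    (finite_setOf_isFaceOf_convexHull A).subset fun _ h => h.1
  obtain ⟨F, hGF, hF⟩ := hfin.exists_le_maximal ⟨hG, hGD⟩
  exact ⟨F, hF, hGF⟩

section RestrictToFace

variable {A : Finset E} {D S : Set E}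

theorem exists_mem_dFam_eq_inter (hS : IsFaceOf (convexHull ℝ (A : Set E)) S) {G : Set E}
    (hG : G ∈ DFam S (D ∩ S)) : ∃ F ∈ DFam (convexHull ℝ (A : Set E)) D, G = F ∩ S := by
  obtain ⟨⟨hGface, hGD⟩, hGmax⟩ := hG
  have hGS : G ⊆ S := hGface.subset
  obtain ⟨F, hF, hGF⟩ := exists_mem_dFam_superset (hS.trans hGface)
    (Set.eq_empty_of_subset_empty fun x hx => hGD ▸ ⟨hx.1, hx.2, hGS hx.1⟩)
  refine ⟨F, hF, subset_antisymm (Set.subset_inter hGF hGS) ?_⟩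
  rcases (F ∩ S).eq_empty_or_nonempty with hFS | hFS
  · exact hFS ▸ Set.empty_subset G
  · refine hGmax ⟨hF.1.1.inter_of_subset hS.subset hFS, ?_⟩ (Set.subset_inter hGF hGS)
    exact Set.eq_empty_of_subset_empty fun x hx => hF.1.2 ▸ ⟨hx.1.1, hx.2.1⟩

theorem biUnion_dFam_inter (hS : IsFaceOf (convexHull ℝ (A : Set E)) S) :
    ⋃ G ∈ DFam S (D ∩ S), G = (⋃ F ∈ DFam (convexHull ℝ (A : Set E)) D, F) ∩ S := by
  ext x
  simp only [Set.mem_iUnion₂, Set.mem_inter_iff, exists_prop]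
  constructor
  · rintro ⟨G, hG, hxG⟩
    obtain ⟨F, hF, rfl⟩ := exists_mem_dFam_eq_inter hS hG
    exact ⟨⟨F, hF, hxG.1⟩, hxG.2⟩
  · rintro ⟨⟨F, hF, hxF⟩, hxS⟩
    have hsup := exists_mem_dFam_superset (A := A.filter (· ∈ S)) (D := D ∩ S) (G := F ∩ S)
    rw [hS.convexHull_filter] at hsup
    obtain ⟨G, hG, hFG⟩ := hsup (hF.1.1.inter_of_subset hS.subset ⟨x, hxF, hxS⟩)
      (Set.eq_empty_of_subset_empty fun y hy => hF.1.2 ▸ ⟨hy.1.1, hy.2.1⟩)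
    exact ⟨G, hG, hFG ⟨hxF, hxS⟩⟩

theorem IsDaughter.inter_face (hD : IsDaughter A D) (hS : IsFaceOf (convexHull ℝ (A : Set E)) S)
    (hDS : (D ∩ S).Nonempty) : IsDaughter (A.filter (· ∈ S)) (D ∩ S) := by
  obtain ⟨-, hdisj, hDeq⟩ := hD
  unfold IsDaughter
  rw [hS.convexHull_filter, Finset.coe_filter_mem, biUnion_dFam_inter hS,
    ← Set.inter_sdiff_distrib_right]
  refine ⟨hDS, fun G₁ hG₁ G₂ hG₂ hne => ?_, ?_⟩
  · obtain ⟨F₁, hF₁, rfl⟩ := exists_mem_dFam_eq_inter hS hG₁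
    obtain ⟨F₂, hF₂, rfl⟩ := exists_mem_dFam_eq_inter hS hG₂
    have hF₁₂ := hdisj F₁ hF₁ F₂ hF₂ fun h => hne (h ▸ rfl)
    exact Set.eq_empty_of_subset_empty fun x hx => hF₁₂ ▸ ⟨hx.1.1, hx.2.1⟩
  · rw [← hS.convexHull_inter (convex_convexHull ℝ _)
      (Set.sdiff_subset.trans (subset_convexHull ℝ _)), ← hDeq]

end RestrictToFace

theorem SemiInterlaced.inter_face {ι : Type*} {A : Finset E} {T : Finset ι} {D : ι → Set E}
    {S : Set E} (h : SemiInterlaced A T D) (hS : IsFaceOf (convexHull ℝ (A : Set E)) S) :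
    SemiInterlaced (A.filter (· ∈ S)) (T.filter fun i => (D i ∩ S).Nonempty)
      (fun i => D i ∩ S) := by
  refine ⟨fun i hi => (h.1 i (Finset.mem_filter.1 hi).1).inter_face hS (Finset.mem_filter.1 hi).2,
    fun F hF => ?_⟩
  rw [hS.convexHull_filter] at hF
  have hFS : F ⊆ S := hF.subset
  refine (h.2 F (hS.trans hF)).trans (Finset.card_le_card fun i hi => ?_)
  obtain ⟨hiT, x, hxD, hxF⟩ := Finset.mem_filter.1 hi
  simp only [Finset.mem_filter]
  exact ⟨⟨hiT, x, hxD, hFS hxF⟩, x, ⟨hxD, hFS hxF⟩, hxF⟩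

end

theorem semi_interlaced_restrict_to_suture_general (n : ℕ) (A : Finset (Fin n → ℝ))
    (D : Fin n → Set (Fin n → ℝ))
    (hsemi : SemiInterlaced A Finset.univ D)
    (S : Set (Fin n → ℝ)) (hS : IsSuture A Finset.univ D S) :
    (Finset.univ.filter fun i => (D i ∩ S).Nonempty).card = sdim S ∧
    SemiInterlaced (A.filter (· ∈ S))
      (Finset.univ.filter fun i => (D i ∩ S).Nonempty)
      (fun i => D i ∩ S) :=
  ⟨hS.2, hsemi.inter_face hS.1⟩

/-- **Restriction of a semi-interlaced configuration to a suture.**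
If `D 1, …, D n` are semi-interlaced daughter polytopes of `A` and `S` is a
suture, then there are exactly `dim S` indices `i` with `D i ∩ S ≠ ∅`, and the
polytopes `D i ∩ S` (over these indices) are semi-interlaced daughter polytopes
of the finite set `A ∩ S`. -/
theorem semi_interlaced_restrict_to_suture (n : ℕ) (A : Finset (Fin n → ℝ))
    (hlat : ∀ p ∈ A, p ∈ intLattice n)
    (P : Set (Fin n → ℝ)) (hP : P = convexHull ℝ (A : Set (Fin n → ℝ)))
    (D : Fin n → Set (Fin n → ℝ))
    (hsemi : SemiInterlaced A Finset.univ D)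
    (S : Set (Fin n → ℝ)) (hS : IsSuture A Finset.univ D S) :
    (Finset.univ.filter fun i => (D i ∩ S).Nonempty).card = sdim S ∧
    SemiInterlaced (A.filter (· ∈ S))
      (Finset.univ.filter fun i => (D i ∩ S).Nonempty)
      (fun i => D i ∩ S) :=
  semi_interlaced_restrict_to_suture_general n A D hsemi S hS

end
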